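/- arXiv:2010.01622 — 3 statements merged into one kernel-verified Lean document; each statement's English description precedes it below -/
import Mathlib

section
/- On the unit circle ∂Ω = {(x,y) : x²+y²=1}, the function g₁(x,y) = |y|^{-1/2} has distribution function α_{g₁}(s) = 2π for 0<s<1 and α_{g₁}(s) = 4 arcsin(1/s²) for s ≥ 1, and decreasing rearrangement g₁*(t) = (csc(t/4))^{1/2}; consequently g₁ ∈ L^{2,∞}(∂Ω) but lim_{t→0} t^{1/2} g₁*(t) > 0, so g₁ does not lie in the closure of C¹(∂Ω) in L^{2,∞}(∂Ω). -/
open MeasureTheory Filter Set Topology Real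

/-- One-dimensional decreasing rearrangement of `f` with respect to the measure `σ`. -/
noncomputable def rearr {α : Type*} [MeasurableSpace α] (σ : Measure α) (f : α → ℝ) (t : ℝ) : ℝ :=
  sInf {s : ℝ | 0 < s ∧ (σ {x | s < |f x|}).toReal < t}

/-- Arclength (1-dimensional Hausdorff) measure on the unit circle `∂Ω ⊂ ℝ²`. -/
noncomputable def circleMeasure : Measure (EuclideanSpace ℝ (Fin 2)) :=
  (μH[1]).restrict (Metric.sphere (0 : EuclideanSpace ℝ (Fin 2)) 1)

/-- `g₁(x,y) = |y|^{-1/2}` on the unit circle. -/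
noncomputable def gOne : EuclideanSpace ℝ (Fin 2) → ℝ := fun x => |x 1| ^ (-(1 / 2) : ℝ)

/-!
Parametrising the circle by `θ ↦ e^{iθ}` on a window of length `2π` carries Lebesgue measure
to `μH[1]`: the parametrisation is `1`-Lipschitz, which gives `≤`, and `≥` then follows by
passing to complements once the circle is known to have length at least `2π`, which comes from
`n` disjoint arcs, each projecting onto a segment of length `sin (2π / n)`. Hence
`α(s) = |{θ : |sin θ| < s⁻²}| = 4 arcsin s⁻²` for every `s > 0` (`arcsin` is `π/2` beyond `1`),
inverting which gives `g₁*(t) = sin (t/4)^{-1/2}` and `t^{1/2} g₁*(t) = (t / sin (t/4))^{1/2} → 2`.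
A continuous `f` is bounded by some `B` on the circle, and then `|(g₁ - f)*(t) - g₁*(t)| ≤ B`, so
`t^{1/2} (g₁ - f)*(t)` still tends to `2` and the weak-`L²` quasinorm of `g₁ - f` never drops
below `1`.
-/

open scoped ENNReal

lemma hausdorffMeasure_image_circleMap_le (s : Set ℝ) :
    μH[1] (circleMap 0 1 '' s) ≤ volume s := by
  simpa [hausdorffMeasure_real] using
    (lipschitzWith_circleMap 0 1).hausdorffMeasure_image_le zero_le_one s

lemma image_circleMap_Ioc_add_two_pi (a : ℝ) :
    circleMap 0 1 '' Ioc a (a + 2 * π) = Metric.sphere 0 1 := by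
  simpa using (periodic_circleMap 0 1).image_Ioc two_pi_pos a

lemma injOn_circleMap_Ioc_add_two_pi (a : ℝ) :
    (Ioc a (a + 2 * π)).InjOn (circleMap 0 1) := by
  have h := injOn_circleMap_of_abs_sub_le (c := 0) one_ne_zero (a := a) (b := a + 2 * π)
    (by simp [abs_of_pos pi_pos])
  rwa [uIoc_of_le (by linarith [pi_pos])] at h

lemma measurableSet_image_circleMap {s : Set ℝ} (hs : MeasurableSet s) {a : ℝ}
    (hsa : s ⊆ Ioc a (a + 2 * π)) : MeasurableSet (circleMap 0 1 '' s) :=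
  hs.image_of_continuousOn_injOn (continuous_circleMap 0 1).continuousOn
    ((injOn_circleMap_Ioc_add_two_pi a).mono hsa)

lemma ofReal_sin_le_hausdorffMeasure_image_circleMap_Ioo (c : ℝ) {h : ℝ} (hh : 0 ≤ h) :
    ENNReal.ofReal (sin h) ≤ μH[1] (circleMap 0 1 '' Ioo c (c + h)) := by
  set p : ℂ → ℝ := fun z => (z * circleMap 0 1 (-c)).im
  have hp : LipschitzWith 1 p := by
    refine LipschitzWith.of_dist_le_mul fun z w => ?_
    have hpzw : p z - p w = ((z - w) * circleMap 0 1 (-c)).im := by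
      simp only [p, sub_mul, Complex.sub_im]
    simpa [Real.dist_eq, hpzw, Complex.dist_eq] using
      Complex.abs_im_le_norm ((z - w) * circleMap 0 1 (-c))
  have hpθ : ∀ θ, p (circleMap 0 1 θ) = sin (θ - c) := fun θ => by
    simp only [p]
    rw [circleMap_zero_mul, circleMap_zero_im, one_mul, one_mul, sub_eq_add_neg]
  have hsub : Ioo 0 (sin h) ⊆ p '' (circleMap 0 1 '' Ioo c (c + h)) := by
    rw [image_image]
    simp_rw [hpθ]
    simpa using intermediate_value_Ioo (by linarith : c ≤ c + h)
      ((continuous_sin.comp (continuous_sub_right c)).continuousOn)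
  calc ENNReal.ofReal (sin h) = volume (Ioo 0 (sin h)) := by simp
    _ ≤ volume (p '' (circleMap 0 1 '' Ioo c (c + h))) := measure_mono hsub
    _ ≤ μH[1] (circleMap 0 1 '' Ioo c (c + h)) := by
      simpa [hausdorffMeasure_real] using hp.hausdorffMeasure_image_le zero_le_one _

lemma ofReal_mul_sin_le_hausdorffMeasure_sphere_zero_one {n : ℕ} (hn : 0 < n) :
    ENNReal.ofReal (n * sin (2 * π / n)) ≤ μH[1] (Metric.sphere (0 : ℂ) 1) := by
  set h := 2 * π / n
  have hh : 0 ≤ h := by positivity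
  have hnh : n * h = 2 * π := by simp only [h]; field_simp
  let I : ℤ → Set ℝ := fun k => Ioo (k * h) (k * h + h)
  have hI : ∀ k ∈ Finset.Ico (0 : ℤ) n, I k ⊆ Ioc 0 (0 + 2 * π) := by
    intro k hk
    obtain ⟨hk0, hkn⟩ := Finset.mem_Ico.mp hk
    have hk0' : (0 : ℝ) ≤ k := by exact_mod_cast hk0
    have hkn' : (k : ℝ) + 1 ≤ n := by exact_mod_cast hkn
    exact Ioo_subset_Ioc_self.trans
      (Ioc_subset_Ioc (by positivity) (by nlinarith))
  have hdisj : (Finset.Ico (0 : ℤ) n : Set ℤ).PairwiseDisjoint (fun k => circleMap 0 1 '' I k) :=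
    fun j hj k hk hjk => by
      have := pairwise_disjoint_Ioo_add_zsmul (0 : ℝ) h hjk
      simp only [Function.onFun, zero_add, zsmul_eq_mul, Int.cast_add, Int.cast_one, add_mul,
        one_mul] at this
      exact this.image (injOn_circleMap_Ioc_add_two_pi 0) (hI j hj) (hI k hk)
  calc ENNReal.ofReal (n * sin h) = ∑ k ∈ Finset.Ico (0 : ℤ) n, ENNReal.ofReal (sin h) := by
        simp [ENNReal.ofReal_mul]
    _ ≤ ∑ k ∈ Finset.Ico (0 : ℤ) n, μH[1] (circleMap 0 1 '' I k) :=
        Finset.sum_le_sum fun k _ => ofReal_sin_le_hausdorffMeasure_image_circleMap_Ioo _ hh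
    _ = μH[1] (⋃ k ∈ Finset.Ico (0 : ℤ) n, circleMap 0 1 '' I k) :=
        (measure_biUnion_finset hdisj fun k hk =>
          measurableSet_image_circleMap measurableSet_Ioo (hI k hk)).symm
    _ ≤ μH[1] (Metric.sphere (0 : ℂ) 1) := by
        refine measure_mono (iUnion₂_subset fun k hk => ?_)
        rw [← image_circleMap_Ioc_add_two_pi 0]
        exact image_mono (hI k hk)

lemma hausdorffMeasure_sphere_zero_one :
    μH[1] (Metric.sphere (0 : ℂ) 1) = ENNReal.ofReal (2 * π) := by
  refine le_antisymm ?_ ?_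
  · rw [← image_circleMap_Ioc_add_two_pi 0]
    simpa using hausdorffMeasure_image_circleMap_le (Ioc 0 (0 + 2 * π))
  · have hsinc : Tendsto (fun n : ℕ => 2 * π * sinc (2 * π / n)) atTop (𝓝 (2 * π * sinc 0)) :=
      ((continuous_sinc.tendsto 0).comp (tendsto_const_div_atTop_nhds_zero_nat _)).const_mul _
    rw [sinc_zero, mul_one] at hsinc
    have hlim : Tendsto (fun n : ℕ => ENNReal.ofReal (n * sin (2 * π / n))) atTop
        (𝓝 (ENNReal.ofReal (2 * π))) := by
      refine ENNReal.tendsto_ofReal (hsinc.congr' ?_)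
      filter_upwards [eventually_gt_atTop 0] with n hn
      rw [sinc_of_ne_zero (by positivity)]
      field_simp
    exact le_of_tendsto hlim ((eventually_gt_atTop 0).mono fun n hn =>
      ofReal_mul_sin_le_hausdorffMeasure_sphere_zero_one hn)

lemma hausdorffMeasure_image_circleMap {s : Set ℝ} (hs : MeasurableSet s) {a : ℝ}
    (hsa : s ⊆ Ioc a (a + 2 * π)) : μH[1] (circleMap 0 1 '' s) = volume s := by
  refine le_antisymm (hausdorffMeasure_image_circleMap_le s) ?_
  set W := Ioc a (a + 2 * π)
  have hvs : volume s ≤ ENNReal.ofReal (2 * π) := by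
    simpa [W] using measure_mono (μ := volume) hsa
  have hsplit : ENNReal.ofReal (2 * π)
      = μH[1] (circleMap 0 1 '' s) + μH[1] (circleMap 0 1 '' (W \ s)) := by
    rw [(injOn_circleMap_Ioc_add_two_pi a).image_sdiff_subset hsa,
      measure_add_sdiff (measurableSet_image_circleMap hs hsa).nullMeasurableSet,
      union_eq_self_of_subset_left (image_mono hsa), image_circleMap_Ioc_add_two_pi,
      hausdorffMeasure_sphere_zero_one]
  have hcompl : μH[1] (circleMap 0 1 '' (W \ s)) ≤ ENNReal.ofReal (2 * π) - volume s := by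
    refine (hausdorffMeasure_image_circleMap_le _).trans_eq ?_
    rw [measure_sdiff hsa hs.nullMeasurableSet (hvs.trans_lt ENNReal.ofReal_lt_top).ne]
    simp [W]
  rw [← ENNReal.sub_sub_cancel ENNReal.ofReal_ne_top hvs, tsub_le_iff_left, add_comm]
  exact hsplit.trans_le (by gcongr)

lemma abs_sin_lt_iff_abs_lt_arcsin {m φ : ℝ} (hm : m ∈ Icc (-1) 1) (hφ : |φ| ≤ π / 2) :
    |sin φ| < m ↔ |φ| < arcsin m := by
  obtain ⟨hφ₁, hφ₂⟩ := abs_le.mp hφ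
  rw [abs_eq_max_neg, abs_eq_max_neg, max_lt_iff, max_lt_iff, ← sin_neg,
    lt_arcsin_iff_sin_lt ⟨hφ₁, hφ₂⟩ hm, lt_arcsin_iff_sin_lt ⟨by linarith, by linarith⟩ hm]

lemma setOf_abs_sin_lt_eq {m : ℝ} (hm : m ∈ Icc (-1) 1) :
    {θ ∈ Ioc (-(π / 2)) (-(π / 2) + 2 * π) | |sin θ| < m}
      = Ioo (-arcsin m) (arcsin m) ∪ Ioo (π - arcsin m) (π + arcsin m) := by
  have ha := arcsin_le_pi_div_two m
  ext θ
  simp only [mem_ofPred_eq, mem_Ioc, mem_union, mem_Ioo]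
  constructor
  · rintro ⟨⟨hθ₁, hθ₂⟩, hsin⟩
    by_cases hθ : θ ≤ π / 2
    · left
      rw [abs_sin_lt_iff_abs_lt_arcsin hm (abs_le.mpr ⟨hθ₁.le, hθ⟩), abs_lt] at hsin
      exact hsin
    · right
      rw [← abs_neg, ← sin_sub_pi, abs_sin_lt_iff_abs_lt_arcsin hm
        (abs_le.mpr ⟨by linarith, by linarith⟩), abs_lt] at hsin
      constructor <;> linarith
  · rintro (⟨h₁, h₂⟩ | ⟨h₁, h₂⟩)
    · refine ⟨⟨by linarith, by linarith⟩, ?_⟩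
      rw [abs_sin_lt_iff_abs_lt_arcsin hm (abs_le.mpr ⟨by linarith, by linarith⟩), abs_lt]
      exact ⟨h₁, h₂⟩
    · refine ⟨⟨by linarith, by linarith⟩, ?_⟩
      rw [← abs_neg, ← sin_sub_pi, abs_sin_lt_iff_abs_lt_arcsin hm
        (abs_le.mpr ⟨by linarith, by linarith⟩), abs_lt]
      constructor <;> linarith

lemma volume_setOf_abs_sin_lt {m : ℝ} (hm : m ∈ Icc 0 1) :
    volume {θ ∈ Ioc (-(π / 2)) (-(π / 2) + 2 * π) | |sin θ| < m}
      = ENNReal.ofReal (4 * arcsin m) := by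
  have ha₀ : 0 ≤ arcsin m := arcsin_nonneg.mpr hm.1
  have ha := arcsin_le_pi_div_two m
  have hdisj : Disjoint (Ioo (-arcsin m) (arcsin m)) (Ioo (π - arcsin m) (π + arcsin m)) :=
    disjoint_left.mpr fun θ h₁ h₂ => by linarith [h₁.2, h₂.1]
  rw [setOf_abs_sin_lt_eq ⟨by linarith [hm.1], hm.2⟩, measure_union hdisj measurableSet_Ioo,
    volume_Ioo, volume_Ioo, ← ENNReal.ofReal_add (by linarith) (by linarith)]
  ring_nf

lemma hausdorffMeasure_abs_im_lt_inter_sphere {m : ℝ} (hm : 0 < m) :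
    μH[1] ({z : ℂ | |z.im| < m} ∩ Metric.sphere 0 1) = ENNReal.ofReal (4 * arcsin m) := by
  rcases le_or_gt m 1 with hm₁ | hm₁
  · have hW := image_circleMap_Ioc_add_two_pi (-(π / 2))
    have hmeas : MeasurableSet {θ ∈ Ioc (-(π / 2)) (-(π / 2) + 2 * π) | |sin θ| < m} :=
      measurableSet_Ioc.inter (measurableSet_lt (by fun_prop : Measurable fun θ => |sin θ|)
        measurable_const)
    rw [← volume_setOf_abs_sin_lt ⟨hm.le, hm₁⟩, ← hausdorffMeasure_image_circleMap hmeas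
      (sep_subset _ _), ← hW, inter_comm, ← image_inter_preimage]
    congr 2
    ext θ
    simp [circleMap_zero_im]
  · have hsphere : {z : ℂ | |z.im| < m} ∩ Metric.sphere 0 1 = Metric.sphere 0 1 :=
      inter_eq_right.mpr fun z hz => by
        have := Complex.abs_im_le_norm z
        simp only [mem_sphere_zero_iff_norm] at hz
        exact (this.trans_eq hz).trans_lt hm₁
    rw [hsphere, hausdorffMeasure_sphere_zero_one, arcsin_of_one_le hm₁.le]
    ring_nf

lemma circleMeasure_apply (A : Set (EuclideanSpace ℝ (Fin 2))) :
    circleMeasure A = μH[1] (Complex.orthonormalBasisOneI.repr ⁻¹' A ∩ Metric.sphere 0 1) := by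
  rw [circleMeasure, Measure.restrict_apply' Metric.isClosed_sphere.measurableSet,
    ← Complex.orthonormalBasisOneI.repr.toIsometryEquiv.hausdorffMeasure_preimage, preimage_inter,
    IsometryEquiv.preimage_sphere]
  simp

lemma gOne_apply_repr (z : ℂ) :
    gOne (Complex.orthonormalBasisOneI.repr z) = |z.im| ^ (-(1 / 2) : ℝ) := by
  simp [gOne]

lemma lt_rpow_neg_half_iff {x s : ℝ} (hx : 0 < x) (hs : 0 < s) :
    s < x ^ (-(1 / 2) : ℝ) ↔ x < 1 / s ^ 2 := by
  have h := lt_rpow_inv_iff_of_neg hs hx (by norm_num : (-2 : ℝ) < 0)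
  rwa [show ((-2 : ℝ))⁻¹ = -(1 / 2) by norm_num, rpow_neg hs.le, rpow_two, ← one_div] at h

lemma rpow_neg_half_lt_iff {x s : ℝ} (hx : 0 < x) (hs : 0 < s) :
    x ^ (-(1 / 2) : ℝ) < s ↔ 1 / s ^ 2 < x := by
  have h := rpow_inv_lt_iff_of_neg hx hs (by norm_num : (-2 : ℝ) < 0)
  rwa [show ((-2 : ℝ))⁻¹ = -(1 / 2) by norm_num, rpow_neg hs.le, rpow_two, ← one_div] at h

-- `0 ^ (-1/2) = 0` in Lean, so `y = 0` lies below every positive level.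
lemma lt_abs_rpow_neg_half_iff {s y : ℝ} (hs : 0 < s) :
    s < |y| ^ (-(1 / 2) : ℝ) ↔ |y| < 1 / s ^ 2 ∧ y ≠ 0 := by
  rcases eq_or_ne y 0 with rfl | hy
  · simp [hs.le]
  · rw [lt_rpow_neg_half_iff (abs_pos.mpr hy) hs, and_iff_left hy]

lemma hausdorffMeasure_im_eq_zero_inter_sphere :
    μH[1] ({z : ℂ | z.im = 0} ∩ Metric.sphere 0 1) = 0 := by
  have := Measure.nullSingletonClass_hausdorff ℂ one_pos
  refine measure_mono_null (t := {1, -1}) ?_ ((toFinite _).measure_zero _)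
  rintro z ⟨him, hz⟩
  have hz' : z = z.re := Complex.ext rfl (by simpa using him)
  rw [mem_sphere_zero_iff_norm, hz', Complex.norm_real, Real.norm_eq_abs] at hz
  rcases abs_eq zero_le_one |>.mp hz with h | h <;> rw [hz', h] <;> simp

lemma circleMeasure_setOf_lt_gOne {s : ℝ} (hs : 0 < s) :
    circleMeasure {x | s < |gOne x|} = ENNReal.ofReal (4 * arcsin (1 / s ^ 2)) := by
  have hlevel : Complex.orthonormalBasisOneI.repr ⁻¹' {x | s < |gOne x|} ∩ Metric.sphere 0 1
      = ({z : ℂ | |z.im| < 1 / s ^ 2} ∩ Metric.sphere 0 1)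
        \ ({z : ℂ | z.im = 0} ∩ Metric.sphere 0 1) := by
    ext z
    simp only [mem_inter_iff, mem_preimage, mem_ofPred_eq, Set.mem_sdiff, gOne_apply_repr,
      abs_of_nonneg (rpow_nonneg (abs_nonneg _) _), lt_abs_rpow_neg_half_iff hs]
    tauto
  rw [circleMeasure_apply, hlevel, measure_sdiff_null hausdorffMeasure_im_eq_zero_inter_sphere,
    hausdorffMeasure_abs_im_lt_inter_sphere (by positivity)]

instance : IsFiniteMeasure circleMeasure :=
  ⟨by
    rw [circleMeasure_apply, preimage_univ, univ_inter, hausdorffMeasure_sphere_zero_one]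
    exact ENNReal.ofReal_lt_top⟩

section Rearrangement

variable {α : Type*} [MeasurableSpace α] {σ : Measure α} [IsFiniteMeasure σ] {u w : α → ℝ}
  {B t : ℝ}

lemma add_mem_levels_of_ae_abs_le (hB : 0 ≤ B) (huw : ∀ᵐ x ∂σ, |u x| ≤ |w x| + B) {s : ℝ}
    (hs : 0 < s ∧ (σ {x | s < |w x|}).toReal < t) :
    0 < s + B ∧ (σ {x | s + B < |u x|}).toReal < t := by
  refine ⟨by linarith [hs.1], lt_of_le_of_lt ?_ hs.2⟩
  refine ENNReal.toReal_mono (measure_ne_top _ _) (measure_mono_ae ?_)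
  filter_upwards [huw] with x hx hxu
  exact lt_of_add_lt_add_right (hxu.trans_le hx)

lemma rearr_le_rearr_add_of_ae_abs_le (hB : 0 ≤ B) (huw : ∀ᵐ x ∂σ, |u x| ≤ |w x| + B)
    (hw : ∃ s, 0 < s ∧ (σ {x | s < |w x|}).toReal < t) :
    rearr σ u t ≤ rearr σ w t + B := by
  obtain ⟨s₀, hs₀⟩ := hw
  rw [← sub_le_iff_le_add]
  refine le_csInf ⟨s₀, hs₀⟩ fun s hs => sub_le_iff_le_add.mpr ?_
  exact csInf_le ⟨0, fun _ h => h.1.le⟩ (add_mem_levels_of_ae_abs_le hB huw hs)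

end Rearrangement

lemma sin_div_four_pos {t : ℝ} (ht : t ∈ Ioo 0 (2 * π)) : 0 < sin (t / 4) :=
  sin_pos_of_pos_of_lt_pi (by linarith [ht.1]) (by linarith [ht.2, pi_pos])

lemma setOf_levels_gOne_eq_Ioi {t : ℝ} (ht : t ∈ Ioo 0 (2 * π)) :
    {s : ℝ | 0 < s ∧ (circleMeasure {x | s < |gOne x|}).toReal < t}
      = Ioi (sin (t / 4) ^ (-(1 / 2) : ℝ)) := by
  have hsin := sin_div_four_pos ht
  have ht4 : t / 4 ∈ Ioc (-(π / 2)) (π / 2) := ⟨by linarith [ht.1, pi_pos], by linarith [ht.2]⟩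
  have hlevel : ∀ s, 0 < s →
      ((circleMeasure {x | s < |gOne x|}).toReal < t ↔ sin (t / 4) ^ (-(1 / 2) : ℝ) < s) := by
    intro s hs
    rw [circleMeasure_setOf_lt_gOne hs,
      ENNReal.toReal_ofReal (mul_nonneg zero_le_four (arcsin_nonneg.mpr (by positivity))),
      rpow_neg_half_lt_iff hsin hs, ← arcsin_lt_iff_lt_sin' ht4]
    constructor <;> intro h <;> linarith
  ext s
  simp only [mem_ofPred_eq, mem_Ioi]
  constructor
  · exact fun ⟨hs, h⟩ => (hlevel s hs).mp h
  · intro h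
    have hs : 0 < s := (rpow_pos_of_pos hsin _).trans h
    exact ⟨hs, (hlevel s hs).mpr h⟩

lemma rearr_gOne {t : ℝ} (ht : t ∈ Ioo 0 (2 * π)) :
    rearr circleMeasure gOne t = sin (t / 4) ^ (-(1 / 2) : ℝ) := by
  rw [rearr, setOf_levels_gOne_eq_Ioi ht, csInf_Ioi]

lemma exists_level_gOne {t : ℝ} (ht : t ∈ Ioo 0 (2 * π)) :
    ∃ s, 0 < s ∧ (circleMeasure {x | s < |gOne x|}).toReal < t := by
  have h : sin (t / 4) ^ (-(1 / 2) : ℝ) + 1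
      ∈ {s : ℝ | 0 < s ∧ (circleMeasure {x | s < |gOne x|}).toReal < t} := by
    rw [setOf_levels_gOne_eq_Ioi ht]
    exact lt_add_one (sin (t / 4) ^ (-(1 / 2) : ℝ))
  exact ⟨_, h⟩

lemma rpow_half_mul_rearr_gOne {t : ℝ} (ht : t ∈ Ioo 0 (2 * π)) :
    t ^ ((1 : ℝ) / 2) * rearr circleMeasure gOne t = (t / sin (t / 4)) ^ ((1 : ℝ) / 2) := by
  have hsin := sin_div_four_pos ht
  rw [rearr_gOne ht, div_rpow ht.1.le hsin.le, rpow_neg hsin.le, ← div_eq_mul_inv]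

lemma div_sin_div_four_le {t : ℝ} (ht : t ∈ Ioo 0 (2 * π)) : t / sin (t / 4) ≤ 2 * π := by
  have hsin := sin_div_four_pos ht
  have hjordan := mul_le_sin (by linarith [ht.1] : 0 ≤ t / 4) (by linarith [ht.2])
  rw [div_le_iff₀ hsin]
  calc t = 2 * π * (2 / π * (t / 4)) := by field_simp; ring
    _ ≤ 2 * π * sin (t / 4) := by gcongr

lemma tendsto_div_sin_div_four : Tendsto (fun t => t / sin (t / 4)) (𝓝[>] 0) (𝓝 4) := by
  have hsinc : Tendsto (fun t => 4 / sinc (t / 4)) (𝓝 0) (𝓝 (4 / sinc (0 / 4))) :=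
    tendsto_const_nhds.div ((continuous_sinc.comp (continuous_id.div_const 4)).tendsto 0)
      (by simp [sinc_zero])
  rw [zero_div, sinc_zero, div_one] at hsinc
  refine (hsinc.mono_left nhdsWithin_le_nhds).congr' ?_
  filter_upwards [self_mem_nhdsWithin] with t (ht : 0 < t)
  rw [sinc_of_ne_zero (by positivity)]
  field_simp

lemma tendsto_rpow_half_mul_rearr_gOne :
    Tendsto (fun t => t ^ ((1 : ℝ) / 2) * rearr circleMeasure gOne t) (𝓝[>] 0) (𝓝 2) := by
  have h := ((continuousAt_rpow_const 4 ((1 : ℝ) / 2) (Or.inl four_ne_zero)).tendsto).comp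
    tendsto_div_sin_div_four
  rw [show (4 : ℝ) ^ ((1 : ℝ) / 2) = 2 by
    rw [← sqrt_eq_rpow, show (4 : ℝ) = 2 ^ 2 by norm_num, sqrt_sq zero_le_two]] at h
  refine h.congr' ?_
  filter_upwards [Ioo_mem_nhdsGT two_pi_pos] with t ht
  exact (rpow_half_mul_rearr_gOne ht).symm

lemma rpow_half_mul_rearr_gOne_le {t : ℝ} (ht : t ∈ Ioo 0 (2 * π)) :
    t ^ ((1 : ℝ) / 2) * rearr circleMeasure gOne t ≤ (2 * π) ^ ((1 : ℝ) / 2) := by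
  rw [rpow_half_mul_rearr_gOne ht]
  exact rpow_le_rpow (div_nonneg ht.1.le (sin_div_four_pos ht).le) (div_sin_div_four_le ht)
    (by norm_num)

section Perturbation

variable {f : EuclideanSpace ℝ (Fin 2) → ℝ} {B : ℝ}

lemma abs_rearr_gOne_sub_sub_rearr_gOne_le (hB : 0 ≤ B)
    (hf : ∀ x ∈ Metric.sphere 0 1, |f x| ≤ B) {t : ℝ} (ht : t ∈ Ioo 0 (2 * π)) :
    |rearr circleMeasure (fun x => gOne x - f x) t - rearr circleMeasure gOne t| ≤ B := by
  have hfB : ∀ᵐ x ∂circleMeasure, |f x| ≤ B :=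
    ae_restrict_of_forall_mem Metric.isClosed_sphere.measurableSet hf
  have hsub : ∀ᵐ x ∂circleMeasure, |gOne x - f x| ≤ |gOne x| + B := by
    filter_upwards [hfB] with x hx
    linarith [abs_sub (gOne x) (f x)]
  have hadd : ∀ᵐ x ∂circleMeasure, |gOne x| ≤ |gOne x - f x| + B := by
    filter_upwards [hfB] with x hx
    linarith [abs_sub_abs_le_abs_sub (gOne x) (f x)]
  obtain ⟨s, hs⟩ := exists_level_gOne ht
  rw [abs_sub_le_iff]
  constructor
  · linarith [rearr_le_rearr_add_of_ae_abs_le hB hsub ⟨s, hs⟩]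
  · linarith [rearr_le_rearr_add_of_ae_abs_le hB hadd
      ⟨s + B, add_mem_levels_of_ae_abs_le hB hsub hs⟩]

lemma bddAbove_rpow_half_mul_rearr_gOne_sub (hB : 0 ≤ B)
    (hf : ∀ x ∈ Metric.sphere 0 1, |f x| ≤ B) :
    BddAbove ((fun t => t ^ ((1 : ℝ) / 2) * rearr circleMeasure (fun x => gOne x - f x) t) ''
      Ioo 0 (2 * π)) := by
  refine ⟨(2 * π) ^ ((1 : ℝ) / 2) * (1 + B), ?_⟩
  rintro _ ⟨t, ht, rfl⟩
  have hle := (abs_le.mp (abs_rearr_gOne_sub_sub_rearr_gOne_le hB hf ht)).2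
  have ht_le : t ^ ((1 : ℝ) / 2) ≤ (2 * π) ^ ((1 : ℝ) / 2) :=
    rpow_le_rpow ht.1.le ht.2.le (by norm_num)
  calc t ^ ((1 : ℝ) / 2) * rearr circleMeasure (fun x => gOne x - f x) t
      ≤ t ^ ((1 : ℝ) / 2) * rearr circleMeasure gOne t + t ^ ((1 : ℝ) / 2) * B := by
        rw [← mul_add]
        exact mul_le_mul_of_nonneg_left (by linarith) (rpow_nonneg ht.1.le _)
    _ ≤ (2 * π) ^ ((1 : ℝ) / 2) + (2 * π) ^ ((1 : ℝ) / 2) * B :=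
        add_le_add (rpow_half_mul_rearr_gOne_le ht) (mul_le_mul_of_nonneg_right ht_le hB)
    _ = (2 * π) ^ ((1 : ℝ) / 2) * (1 + B) := by ring

lemma eventually_one_lt_rpow_half_mul_rearr_gOne_sub (hB : 0 ≤ B)
    (hf : ∀ x ∈ Metric.sphere 0 1, |f x| ≤ B) :
    ∀ᶠ t in 𝓝[>] 0, 1 < t ^ ((1 : ℝ) / 2) * rearr circleMeasure (fun x => gOne x - f x) t := by
  have hrpow : Tendsto (fun t : ℝ => t ^ ((1 : ℝ) / 2)) (𝓝[>] 0) (𝓝 0) := by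
    simpa using ((continuousAt_rpow_const 0 ((1 : ℝ) / 2) (Or.inr (by norm_num))).tendsto
      ).mono_left nhdsWithin_le_nhds
  have hlim := tendsto_rpow_half_mul_rearr_gOne.sub (hrpow.mul_const B)
  rw [zero_mul, sub_zero] at hlim
  filter_upwards [hlim.eventually (lt_mem_nhds one_lt_two), Ioo_mem_nhdsGT two_pi_pos]
    with t hlt ht
  have hge := (abs_le.mp (abs_rearr_gOne_sub_sub_rearr_gOne_le hB hf ht)).1
  calc 1 < t ^ ((1 : ℝ) / 2) * rearr circleMeasure gOne t - t ^ ((1 : ℝ) / 2) * B := hlt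
    _ = t ^ ((1 : ℝ) / 2) * (rearr circleMeasure gOne t - B) := by ring
    _ ≤ _ := mul_le_mul_of_nonneg_left (by linarith) (rpow_nonneg ht.1.le _)

lemma one_lt_sSup_rpow_half_mul_rearr_gOne_sub (hf : Continuous f) :
    1 < sSup ((fun t => t ^ ((1 : ℝ) / 2) * rearr circleMeasure (fun x => gOne x - f x) t) ''
      Ioo 0 (2 * π)) := by
  have hK := isCompact_sphere (0 : EuclideanSpace ℝ (Fin 2)) 1
  obtain ⟨C, hC⟩ := hK.exists_bound_of_continuousOn hf.continuousOn
  have hB : 0 ≤ max C 0 := le_max_right _ _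
  have hfB : ∀ x ∈ Metric.sphere 0 1, |f x| ≤ max C 0 :=
    fun x hx => (hC x hx).trans (le_max_left _ _)
  obtain ⟨t, hlt, ht⟩ := ((eventually_one_lt_rpow_half_mul_rearr_gOne_sub hB hfB).and
    (Ioo_mem_nhdsGT two_pi_pos)).exists
  exact hlt.trans_le (le_csSup (bddAbove_rpow_half_mul_rearr_gOne_sub hB hfB) ⟨t, ht, rfl⟩)

end Perturbation

/-- On the unit circle, `g₁(x,y) = |y|^{-1/2}` has distribution function `2π` for `0<s<1`
and `4 arcsin(1/s²)` for `s ≥ 1`, decreasing rearrangement `g₁*(t) = (csc(t/4))^{1/2}`;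
consequently `g₁ ∈ L^{2,∞}(∂Ω)` but `lim_{t→0} t^{1/2} g₁*(t) > 0`, so `g₁` does not lie
in the closure of `C¹(∂Ω)` in `L^{2,∞}(∂Ω)` (no sequence of restrictions of `C¹`
functions converges to `g₁` in the weak-`L²` quasinorm). -/
theorem circle_weight_example :
    (∀ s : ℝ, 0 < s → s < 1 →
        circleMeasure {x | s < |gOne x|} = ENNReal.ofReal (2 * π)) ∧
    (∀ s : ℝ, 1 ≤ s →
        circleMeasure {x | s < |gOne x|} = ENNReal.ofReal (4 * Real.arcsin (1 / s ^ 2))) ∧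
    (∀ t ∈ Ioo (0 : ℝ) (2 * π),
        rearr circleMeasure gOne t = (Real.sin (t / 4)) ^ (-(1 / 2) : ℝ)) ∧
    BddAbove ((fun t => t ^ ((1 : ℝ) / 2) * rearr circleMeasure gOne t) '' Ioo 0 (2 * π)) ∧
    (∃ c > (0 : ℝ), Tendsto (fun t => t ^ ((1 : ℝ) / 2) * rearr circleMeasure gOne t)
        (𝓝[>] 0) (𝓝 c)) ∧
    (∀ F : ℕ → EuclideanSpace ℝ (Fin 2) → ℝ, (∀ n, ContDiff ℝ 1 (F n)) →
        ¬ Tendsto (fun n => sSup ((fun t =>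
              t ^ ((1 : ℝ) / 2) * rearr circleMeasure (fun x => gOne x - F n x) t)
                '' Ioo 0 (2 * π))) atTop (𝓝 0)) := by
  refine ⟨fun s hs₀ hs₁ => ?_, fun s hs => circleMeasure_setOf_lt_gOne (by linarith),
    fun t ht => rearr_gOne ht, ?_, ⟨2, two_pos, tendsto_rpow_half_mul_rearr_gOne⟩,
    fun F hF hlim => ?_⟩
  · have hs : 1 ≤ 1 / s ^ 2 := by
      rw [le_div_iff₀ (by positivity)]
      nlinarith
    rw [circleMeasure_setOf_lt_gOne hs₀, arcsin_of_one_le hs]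
    ring_nf
  · exact ⟨_, by rintro _ ⟨t, ht, rfl⟩; exact rpow_half_mul_rearr_gOne_le ht⟩
  · obtain ⟨n, hn⟩ := (hlim.eventually (gt_mem_nhds one_pos)).exists
    exact hn.not_gt (one_lt_sSup_rpow_half_mul_rearr_gOne_sub (hF n).continuous)
end

section
/- (Poincaré-type inequality on M_g) Let g ∈ L¹(∂Ω) satisfy ∫_{∂Ω} g < 0 and suppose the boundary functional G(φ) = ∫_{∂Ω} g|φ|^p is weakly sequentially continuous on W^{1,p}(Ω). Then there exists m ∈ (0,1) such that ∫_Ω |∇φ|^p ≥ m ∫_Ω |φ|^p for every φ ∈ W^{1,p}(Ω) with ∫_{∂Ω} g|φ|^p > 0. -/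
/-!
Argue by contradiction. If no `m ∈ (0,1)` works, normalising the counterexamples gives unit
vectors `uₙ` with `G(uₙ) > 0` and `∫|∇uₙ|^p → 0`, hence `∫|uₙ|^p → 1`. A weak limit `v` of a
subsequence has no gradient energy, so it is a constant `c`, and `G(v) = |c|^p ∫_{∂Ω} g ≥ 0`
forces `c = 0`. The compact embedding then gives `∫|uₙ|^p → 0`, which is absurd.
-/

open MeasureTheory Filter Set Topology

def WeakConv {X : Type*} [NormedAddCommGroup X] [NormedSpace ℝ X] (u : ℕ → X) (v : X) : Prop :=
  ∀ ℓ : X →L[ℝ] ℝ, Tendsto (fun n => ℓ (u n)) atTop (𝓝 (ℓ v))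

section

variable {X Ω B : Type*} [NormedAddCommGroup X] [NormedSpace ℝ X]
  [MeasurableSpace Ω] [MeasurableSpace B] {μ : Measure Ω} {σ : Measure B} {p : ℝ}

theorem integral_norm_rpow_map_smul {F : Type*} [NormedAddCommGroup F] [NormedSpace ℝ F]
    (T : X →ₗ[ℝ] Ω → F) {t : ℝ} (ht : 0 ≤ t) (φ : X) :
    ∫ x, ‖T (t • φ) x‖ ^ p ∂μ = t ^ p * ∫ x, ‖T φ x‖ ^ p ∂μ := by
  rw [← integral_const_mul]
  congr 1 with x
  rw [map_smul, Pi.smul_apply, norm_smul, Real.norm_of_nonneg ht, Real.mul_rpow ht (norm_nonneg _)]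

theorem integral_mul_abs_rpow_map_smul (T : X →ₗ[ℝ] B → ℝ) (g : B → ℝ) {t : ℝ} (ht : 0 ≤ t)
    (φ : X) :
    ∫ x, g x * |T (t • φ) x| ^ p ∂σ = t ^ p * ∫ x, g x * |T φ x| ^ p ∂σ := by
  rw [← integral_const_mul]
  congr 1 with x
  rw [map_smul, Pi.smul_apply, smul_eq_mul, abs_mul, abs_of_nonneg ht,
    Real.mul_rpow ht (abs_nonneg _), mul_left_comm]

theorem eq_zero_of_integral_mul_abs_rpow_nonneg {g f : B → ℝ} {c : ℝ} (hgneg : ∫ x, g x ∂σ < 0)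
    (hf : ∀ᵐ x ∂σ, f x = c) (hG : 0 ≤ ∫ x, g x * |f x| ^ p ∂σ) : c = 0 := by
  have hGc : ∫ x, g x * |f x| ^ p ∂σ = (∫ x, g x ∂σ) * |c| ^ p := by
    rw [← integral_mul_const]
    exact integral_congr_ae (by filter_upwards [hf] with x hx; rw [hx])
  by_contra hc
  have := mul_neg_of_neg_of_pos hgneg (Real.rpow_pos_of_pos (abs_pos.2 hc) p)
  linarith

variable {N : ℕ} {D : X →ₗ[ℝ] Ω → EuclideanSpace ℝ (Fin N)} {I : X →ₗ[ℝ] Ω → ℝ}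

theorem exists_norm_eq_one_of_integral_grad_lt
    (hnorm : ∀ φ : X, ‖φ‖ ^ p = (∫ x, ‖D φ x‖ ^ p ∂μ) + ∫ x, |I φ x| ^ p ∂μ)
    (Tr : X →ₗ[ℝ] B → ℝ) (g : B → ℝ) {m : ℝ} (hm0 : 0 ≤ m) (hm1 : m < 1) {φ : X}
    (hG : 0 < ∫ x, g x * |Tr φ x| ^ p ∂σ) (hφ : ∫ x, ‖D φ x‖ ^ p ∂μ < m * ∫ x, |I φ x| ^ p ∂μ) :
    ∃ u : X, ‖u‖ = 1 ∧ 0 < ∫ x, g x * |Tr u x| ^ p ∂σ ∧ ∫ x, ‖D u x‖ ^ p ∂μ < m := by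
  have hφ0 : φ ≠ 0 := by
    rintro rfl
    have hL : 0 ≤ ∫ x, |I 0 x| ^ p ∂μ := integral_nonneg fun x => Real.rpow_nonneg (abs_nonneg _) p
    simp only [map_zero, Pi.zero_apply, norm_zero, abs_zero] at hφ hL
    nlinarith
  set t := ‖φ‖⁻¹
  have ht : 0 < t := inv_pos.2 (norm_pos_iff.2 hφ0)
  have htp : 0 < t ^ p := Real.rpow_pos_of_pos ht p
  have hE : ∫ x, ‖D (t • φ) x‖ ^ p ∂μ < m * ∫ x, |I (t • φ) x| ^ p ∂μ := by
    simp only [← Real.norm_eq_abs, integral_norm_rpow_map_smul _ ht.le] at hφ ⊢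
    rw [mul_left_comm]
    exact mul_lt_mul_of_pos_left hφ htp
  have hunit : ‖t • φ‖ = 1 := norm_smul_inv_norm hφ0
  have hsum := hnorm (t • φ)
  rw [hunit, Real.one_rpow] at hsum
  have hEnn : 0 ≤ ∫ x, ‖D (t • φ) x‖ ^ p ∂μ :=
    integral_nonneg fun x => Real.rpow_nonneg (norm_nonneg _) p
  refine ⟨t • φ, hunit, ?_, by nlinarith⟩
  rw [integral_mul_abs_rpow_map_smul _ _ ht.le]
  exact mul_pos htp hG

variable {Tr : X →ₗ[ℝ] B → ℝ} {g : B → ℝ}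

theorem ae_eq_zero_of_weakConv_of_integral_grad_tendsto_zero (hgneg : ∫ x, g x ∂σ < 0)
    (hGweak : ∀ (u : ℕ → X) (v : X), WeakConv u v →
      Tendsto (fun n => ∫ x, g x * |Tr (u n) x| ^ p ∂σ) atTop
        (𝓝 (∫ x, g x * |Tr v x| ^ p ∂σ)))
    (hwlsc : ∀ (u : ℕ → X) (v : X), WeakConv u v →
      (∫ x, ‖D v x‖ ^ p ∂μ) ≤ liminf (fun n => ∫ x, ‖D (u n) x‖ ^ p ∂μ) atTop)
    (hconst : ∀ φ : X, (∫ x, ‖D φ x‖ ^ p ∂μ) = 0 →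
      ∃ c : ℝ, (∀ᵐ x ∂μ, I φ x = c) ∧ ∀ᵐ x ∂σ, Tr φ x = c)
    {u : ℕ → X} {v : X} (hw : WeakConv u v) (hG : ∀ n, 0 ≤ ∫ x, g x * |Tr (u n) x| ^ p ∂σ)
    (hE : Tendsto (fun n => ∫ x, ‖D (u n) x‖ ^ p ∂μ) atTop (𝓝 0)) :
    ∀ᵐ x ∂μ, I v x = 0 := by
  have hDv : ∫ x, ‖D v x‖ ^ p ∂μ = 0 :=
    le_antisymm (hE.liminf_eq ▸ hwlsc u v hw)
      (integral_nonneg fun x => Real.rpow_nonneg (norm_nonneg _) p)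
  obtain ⟨c, hcμ, hcσ⟩ := hconst v hDv
  have hc : c = 0 := eq_zero_of_integral_mul_abs_rpow_nonneg hgneg hcσ
    (ge_of_tendsto' (hGweak u v hw) hG)
  exact hc ▸ hcμ

theorem not_tendsto_integral_grad_zero_of_norm_eq_one (hgneg : ∫ x, g x ∂σ < 0)
    (hGweak : ∀ (u : ℕ → X) (v : X), WeakConv u v →
      Tendsto (fun n => ∫ x, g x * |Tr (u n) x| ^ p ∂σ) atTop
        (𝓝 (∫ x, g x * |Tr v x| ^ p ∂σ)))
    (hnorm : ∀ φ : X, ‖φ‖ ^ p = (∫ x, ‖D φ x‖ ^ p ∂μ) + ∫ x, |I φ x| ^ p ∂μ)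
    (hreflex : ∀ u : ℕ → X, (∃ R : ℝ, ∀ n, ‖u n‖ ≤ R) →
      ∃ (v : X) (s : ℕ → ℕ), StrictMono s ∧ WeakConv (u ∘ s) v)
    (hcpt : ∀ (u : ℕ → X) (v : X), WeakConv u v →
      Tendsto (fun n => ∫ x, |I (u n) x - I v x| ^ p ∂μ) atTop (𝓝 0))
    (hwlsc : ∀ (u : ℕ → X) (v : X), WeakConv u v →
      (∫ x, ‖D v x‖ ^ p ∂μ) ≤ liminf (fun n => ∫ x, ‖D (u n) x‖ ^ p ∂μ) atTop)
    (hconst : ∀ φ : X, (∫ x, ‖D φ x‖ ^ p ∂μ) = 0 →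
      ∃ c : ℝ, (∀ᵐ x ∂μ, I φ x = c) ∧ ∀ᵐ x ∂σ, Tr φ x = c)
    {u : ℕ → X} (hu : ∀ n, ‖u n‖ = 1) (hG : ∀ n, 0 ≤ ∫ x, g x * |Tr (u n) x| ^ p ∂σ) :
    ¬ Tendsto (fun n => ∫ x, ‖D (u n) x‖ ^ p ∂μ) atTop (𝓝 0) := by
  intro hE
  obtain ⟨v, s, hs, hw⟩ := hreflex u ⟨1, fun n => (hu n).le⟩
  have hEs := hE.comp hs.tendsto_atTop
  have hv : ∀ᵐ x ∂μ, I v x = 0 :=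
    ae_eq_zero_of_weakConv_of_integral_grad_tendsto_zero hgneg hGweak hwlsc hconst hw
      (fun n => hG (s n)) hEs
  have hL0 : Tendsto (fun n => ∫ x, |I (u (s n)) x| ^ p ∂μ) atTop (𝓝 0) := by
    refine (hcpt _ v hw).congr fun n => integral_congr_ae ?_
    filter_upwards [hv] with x hx
    rw [hx, sub_zero, Function.comp_apply]
  have hL1 : Tendsto (fun n => ∫ x, |I (u (s n)) x| ^ p ∂μ) atTop (𝓝 1) := by
    have h := (tendsto_const_nhds (x := (1 : ℝ))).sub hEs
    rw [sub_zero] at h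
    refine h.congr fun n => ?_
    have := hnorm (u (s n))
    rw [hu, Real.one_rpow] at this
    simp only [Function.comp_apply]
    linarith
  exact zero_ne_one (tendsto_nhds_unique hL0 hL1)

end

theorem poincare_on_Mg_general
    {X Ω B : Type*} [NormedAddCommGroup X] [NormedSpace ℝ X]
    [MeasurableSpace Ω] [MeasurableSpace B]
    (μ : Measure Ω) (σ : Measure B)
    (N : ℕ) (p : ℝ)
    (D : X →ₗ[ℝ] Ω → EuclideanSpace ℝ (Fin N)) (I : X →ₗ[ℝ] Ω → ℝ) (Tr : X →ₗ[ℝ] B → ℝ)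
    (g : B → ℝ) (hgneg : (∫ x, g x ∂σ) < 0)
    -- weak sequential continuity of `G`:
    (hGweak : ∀ (u : ℕ → X) (v : X), WeakConv u v →
      Tendsto (fun n => ∫ x, g x * |Tr (u n) x| ^ p ∂σ) atTop
        (𝓝 (∫ x, g x * |Tr v x| ^ p ∂σ)))
    -- `W^{1,p}`-norm identity:
    (hnorm : ∀ φ : X, ‖φ‖ ^ p = (∫ x, ‖D φ x‖ ^ p ∂μ) + ∫ x, |I φ x| ^ p ∂μ)
    -- reflexivity: bounded sequences have weakly convergent subsequences:
    (hreflex : ∀ u : ℕ → X, (∃ R : ℝ, ∀ n, ‖u n‖ ≤ R) →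
      ∃ (v : X) (s : ℕ → ℕ), StrictMono s ∧ WeakConv (u ∘ s) v)
    -- compact embedding `W^{1,p}(Ω) ↪↪ L^p(Ω)`:
    (hcpt : ∀ (u : ℕ → X) (v : X), WeakConv u v →
      Tendsto (fun n => ∫ x, |I (u n) x - I v x| ^ p ∂μ) atTop (𝓝 0))
    -- weak lower semicontinuity of the gradient energy:
    (hwlsc : ∀ (u : ℕ → X) (v : X), WeakConv u v →
      (∫ x, ‖D v x‖ ^ p ∂μ) ≤ liminf (fun n => ∫ x, ‖D (u n) x‖ ^ p ∂μ) atTop)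
    -- on the connected domain, gradient-free functions are constants (also in trace):
    (hconst : ∀ φ : X, (∫ x, ‖D φ x‖ ^ p ∂μ) = 0 →
      ∃ c : ℝ, (∀ᵐ x ∂μ, I φ x = c) ∧ ∀ᵐ x ∂σ, Tr φ x = c) :
    ∃ m : ℝ, m ∈ Ioo (0 : ℝ) 1 ∧ ∀ φ : X,
      (0 < ∫ x, g x * |Tr φ x| ^ p ∂σ) →
        m * (∫ x, |I φ x| ^ p ∂μ) ≤ ∫ x, ‖D φ x‖ ^ p ∂μ := by
  by_contra! hcon
  obtain ⟨m, -, hm, hm0⟩ := exists_seq_strictAnti_tendsto' (zero_lt_one' ℝ)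
  have hunit : ∀ n, ∃ u : X, ‖u‖ = 1 ∧ 0 < ∫ x, g x * |Tr u x| ^ p ∂σ ∧
      ∫ x, ‖D u x‖ ^ p ∂μ < m n := by
    intro n
    obtain ⟨φ, hG, hφ⟩ := hcon (m n) (hm n)
    exact exists_norm_eq_one_of_integral_grad_lt hnorm Tr g (hm n).1.le (hm n).2 hG hφ
  choose u hu hG hE using hunit
  refine not_tendsto_integral_grad_zero_of_norm_eq_one hgneg hGweak hnorm hreflex hcpt hwlsc
    hconst hu (fun n => (hG n).le) (squeeze_zero (fun n => ?_) (fun n => (hE n).le) hm0)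
  exact integral_nonneg fun x => Real.rpow_nonneg (norm_nonneg _) p

/-- Poincaré-type inequality on `M_g`: if `g ∈ L¹(∂Ω)` with `∫_{∂Ω} g < 0` and the
boundary functional `G(φ) = ∫_{∂Ω} g|φ|^p` is weakly sequentially continuous on
`W^{1,p}(Ω)` (modelled by `X` with gradient `D`, inclusion `I` into `L^p(Ω)` and trace
`Tr`), then there exists `m ∈ (0,1)` with `∫_Ω |∇φ|^p ≥ m ∫_Ω |φ|^p` whenever
`∫_{∂Ω} g|φ|^p > 0`. -/
theorem poincare_on_Mg
    {X Ω B : Type*} [NormedAddCommGroup X] [NormedSpace ℝ X]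
    [MeasurableSpace Ω] [MeasurableSpace B]
    (μ : Measure Ω) [IsFiniteMeasure μ] (σ : Measure B) [IsFiniteMeasure σ]
    (N : ℕ) (p : ℝ) (hp : 1 < p)
    (D : X →ₗ[ℝ] Ω → EuclideanSpace ℝ (Fin N)) (I : X →ₗ[ℝ] Ω → ℝ) (Tr : X →ₗ[ℝ] B → ℝ)
    (g : B → ℝ) (hg : Integrable g σ) (hgneg : (∫ x, g x ∂σ) < 0)
    -- weak sequential continuity of `G`:
    (hGweak : ∀ (u : ℕ → X) (v : X), WeakConv u v →
      Tendsto (fun n => ∫ x, g x * |Tr (u n) x| ^ p ∂σ) atTop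
        (𝓝 (∫ x, g x * |Tr v x| ^ p ∂σ)))
    -- `W^{1,p}`-norm identity:
    (hnorm : ∀ φ : X, ‖φ‖ ^ p = (∫ x, ‖D φ x‖ ^ p ∂μ) + ∫ x, |I φ x| ^ p ∂μ)
    -- reflexivity: bounded sequences have weakly convergent subsequences:
    (hreflex : ∀ u : ℕ → X, (∃ R : ℝ, ∀ n, ‖u n‖ ≤ R) →
      ∃ (v : X) (s : ℕ → ℕ), StrictMono s ∧ WeakConv (u ∘ s) v)
    -- compact embedding `W^{1,p}(Ω) ↪↪ L^p(Ω)`: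
    (hcpt : ∀ (u : ℕ → X) (v : X), WeakConv u v →
      Tendsto (fun n => ∫ x, |I (u n) x - I v x| ^ p ∂μ) atTop (𝓝 0))
    -- weak lower semicontinuity of the gradient energy:
    (hwlsc : ∀ (u : ℕ → X) (v : X), WeakConv u v →
      (∫ x, ‖D v x‖ ^ p ∂μ) ≤ liminf (fun n => ∫ x, ‖D (u n) x‖ ^ p ∂μ) atTop)
    -- on the connected domain, gradient-free functions are constants (also in trace):
    (hconst : ∀ φ : X, (∫ x, ‖D φ x‖ ^ p ∂μ) = 0 →
      ∃ c : ℝ, (∀ᵐ x ∂μ, I φ x = c) ∧ ∀ᵐ x ∂σ, Tr φ x = c) :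
    ∃ m : ℝ, m ∈ Ioo (0 : ℝ) 1 ∧ ∀ φ : X,
      (0 < ∫ x, g x * |Tr φ x| ^ p ∂σ) →
        m * (∫ x, |I φ x| ^ p ∂μ) ≤ ∫ x, ‖D φ x‖ ^ p ∂μ :=
  poincare_on_Mg_general μ σ N p D I Tr g hgneg hGweak hnorm hreflex hcpt hwlsc hconst
end

section
/- Under the hypotheses ensuring the Poincaré inequality on M_g and the compactness of G and G′, the energy J(φ) = ∫_Ω|∇φ|^p satisfies the Palais-Smale condition on the C¹ manifold N_g = {φ ∈ W^{1,p}(Ω) : ∫_{∂Ω} g|φ|^p = 1}: any sequence (φ_n) ⊂ N_g with J(φ_n) → λ ∈ ℝ and ‖dJ(φ_n)‖ → 0 has a subsequence converging in N_g. -/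
/-!
A Palais–Smale sequence on `N_g` is bounded by coercivity, so by reflexivity a subsequence
converges weakly to some `v`, which lies in `N_g` by weak closedness. Choosing almost optimal
multipliers `lₙ` gives `J′(uₙ) - lₙ G′(uₙ) → 0`; testing against `uₙ` and using the Euler
identities `⟨J′φ, φ⟩ = pJ(φ)`, `⟨G′φ, φ⟩ = pG(φ) = p` shows `lₙ → c`. Splitting
`⟨J′(uₙ), uₙ - v⟩ = ⟨J′(uₙ) - lₙG′(uₙ), uₙ - v⟩ + lₙ⟨G′(uₙ) - G′(v), uₙ - v⟩ + lₙ⟨G′(v), uₙ - v⟩`,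
each term tends to `0` (the first and second because the functionals tend to `0` in norm and
`uₙ - v` is bounded, the third by weak convergence), so the `α`-property of `J′` upgrades the
weak convergence to strong convergence.
-/

open MeasureTheory Filter Set Topology

/-- The norm of the differential of `J` on the manifold `N_g = G⁻¹(1)`:
`‖dJ(φ)‖ = min_{λ∈ℝ} ‖(J′ - λG′)(φ)‖`. -/
noncomputable def dJnorm {X : Type*} [NormedAddCommGroup X] [NormedSpace ℝ X]
    (J' G' : X → X →L[ℝ] ℝ) (φ : X) : ℝ :=
  sInf (Set.range fun l : ℝ => ‖J' φ - l • G' φ‖)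

theorem ContinuousLinearMap.tendsto_apply_zero_of_isBoundedUnder
    {𝕜 E F : Type*} [NontriviallyNormedField 𝕜] [SeminormedAddCommGroup E] [NormedSpace 𝕜 E]
    [SeminormedAddCommGroup F] [NormedSpace 𝕜 F] {T : ℕ → E →L[𝕜] F} {x : ℕ → E}
    (hT : Tendsto T atTop (𝓝 0)) (hx : IsBoundedUnder (· ≤ ·) atTop (norm ∘ x)) :
    Tendsto (fun n => T n (x n)) atTop (𝓝 0) :=
  hT.op_zero_isBoundedUnder_le hx (fun T x => T x) ContinuousLinearMap.le_opNorm

section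

variable {X : Type*} [NormedAddCommGroup X] [NormedSpace ℝ X]

theorem WeakConv.tendsto_apply_sub {u : ℕ → X} {v : X} (hw : WeakConv u v) (ℓ : X →L[ℝ] ℝ) :
    Tendsto (fun n => ℓ (u n - v)) atTop (𝓝 0) := by
  simpa only [map_sub, sub_self] using (hw ℓ).sub_const (ℓ v)

theorem exists_tendsto_sub_smul_of_tendsto_dJnorm {J' G' : X → X →L[ℝ] ℝ} {u : ℕ → X}
    (hdJ : Tendsto (fun n => dJnorm J' G' (u n)) atTop (𝓝 0)) :
    ∃ l : ℕ → ℝ, Tendsto (fun n => J' (u n) - l n • G' (u n)) atTop (𝓝 0) := by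
  have hnear : ∀ n : ℕ, ∃ l : ℝ,
      ‖J' (u n) - l • G' (u n)‖ < dJnorm J' G' (u n) + 1 / (n + 1) := by
    intro n
    obtain ⟨_, ⟨l, rfl⟩, hl⟩ := Real.lt_sInf_add_pos (range_nonempty (ι := ℝ) _)
      (Nat.one_div_pos_of_nat (n := n))
    exact ⟨l, hl⟩
  choose l hl using hnear
  refine ⟨l, tendsto_zero_iff_norm_tendsto_zero.2 <|
    squeeze_zero (fun n => norm_nonneg _) (fun n => (hl n).le) ?_⟩
  simpa using hdJ.add tendsto_one_div_add_atTop_nhds_zero_nat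

theorem tendsto_multiplier_of_euler_identity {p c : ℝ} (hp : p ≠ 0) {J G : X → ℝ}
    {J' G' : X → X →L[ℝ] ℝ} (hJφ : ∀ φ, J' φ φ = p * J φ) (hGφ : ∀ φ, G' φ φ = p * G φ)
    {u : ℕ → X} {l : ℕ → ℝ} (hGu : ∀ n, G (u n) = 1)
    (hu : IsBoundedUnder (· ≤ ·) atTop (norm ∘ u))
    (hJc : Tendsto (fun n => J (u n)) atTop (𝓝 c))
    (hl : Tendsto (fun n => J' (u n) - l n • G' (u n)) atTop (𝓝 0)) :
    Tendsto l atTop (𝓝 c) := by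
  have htest : Tendsto (fun n => p * J (u n) - l n * p) atTop (𝓝 0) := by
    convert ContinuousLinearMap.tendsto_apply_zero_of_isBoundedUnder hl hu using 2 with n
    simp [hJφ, hGφ, hGu n]
  have hl_eq : l = fun n => J (u n) - (p * J (u n) - l n * p) / p := by
    funext n
    field_simp
    ring
  rw [hl_eq]
  simpa using hJc.sub (htest.div_const p)

theorem tendsto_apply_sub_of_weakConv {u : ℕ → X} {v : X} (hw : WeakConv u v)
    (hu : IsBoundedUnder (· ≤ ·) atTop (norm ∘ fun n => u n - v))
    {A B : ℕ → X →L[ℝ] ℝ} {b : X →L[ℝ] ℝ} {l : ℕ → ℝ} {c : ℝ}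
    (hAB : Tendsto (fun n => A n - l n • B n) atTop (𝓝 0)) (hl : Tendsto l atTop (𝓝 c))
    (hB : Tendsto B atTop (𝓝 b)) :
    Tendsto (fun n => A n (u n - v)) atTop (𝓝 0) := by
  have hsplit : ∀ n, A n (u n - v) = (A n - l n • B n) (u n - v)
      + l n * ((B n - b) (u n - v)) + l n * b (u n - v) := by
    intro n
    simp only [sub_apply, smul_apply, smul_eq_mul]
    ring
  have hfirst := ContinuousLinearMap.tendsto_apply_zero_of_isBoundedUnder hAB hu
  have hsecond := hl.mul <| ContinuousLinearMap.tendsto_apply_zero_of_isBoundedUnder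
    (tendsto_sub_nhds_zero_iff.2 hB) hu
  have hthird := hl.mul (hw.tendsto_apply_sub b)
  simpa only [hsplit, mul_zero, add_zero] using (hfirst.add hsecond).add hthird

end

theorem palais_smale_on_Ng_general
    {X : Type*} [NormedAddCommGroup X] [NormedSpace ℝ X] (p : ℝ) (hp : 1 < p)
    (J G : X → ℝ) (J' G' : X → X →L[ℝ] ℝ)
    (hJφ : ∀ φ : X, J' φ φ = p * J φ) (hGφ : ∀ φ : X, G' φ φ = p * G φ)
    -- `J′` is of class `α(W^{1,p}(Ω))`:
    (halpha : ∀ (u : ℕ → X) (v : X), WeakConv u v →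
      limsup (fun n => J' (u n) (u n - v)) atTop ≤ 0 → Tendsto u atTop (𝓝 v))
    -- `G′` is compact:
    (hG'cpt : ∀ (u : ℕ → X) (v : X), WeakConv u v →
      Tendsto (fun n => ‖G' (u n) - G' v‖) atTop (𝓝 0))
    -- `N_g` is weakly closed:
    (hwclosed : ∀ (u : ℕ → X) (v : X), WeakConv u v → (∀ n, G (u n) = 1) → G v = 1)
    -- `J` is coercive on `N_g`:
    (hcoercive : ∀ c : ℝ, ∃ R : ℝ, ∀ φ : X, G φ = 1 → J φ ≤ c → ‖φ‖ ≤ R)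
    -- reflexivity:
    (hreflex : ∀ u : ℕ → X, (∃ R : ℝ, ∀ n, ‖u n‖ ≤ R) →
      ∃ (v : X) (s : ℕ → ℕ), StrictMono s ∧ WeakConv (u ∘ s) v) :
    ∀ (u : ℕ → X) (c : ℝ), (∀ n, G (u n) = 1) →
      Tendsto (fun n => J (u n)) atTop (𝓝 c) →
      Tendsto (fun n => dJnorm J' G' (u n)) atTop (𝓝 0) →
      ∃ (v : X) (s : ℕ → ℕ), StrictMono s ∧ G v = 1 ∧ Tendsto (u ∘ s) atTop (𝓝 v) := by
  intro u c hGu hJc hdJ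
  obtain ⟨C, hC⟩ := hJc.bddAbove_range
  obtain ⟨R, hR⟩ := hcoercive C
  have hu : ∀ n, ‖u n‖ ≤ R := fun n => hR (u n) (hGu n) (hC ⟨n, rfl⟩)
  obtain ⟨v, s, hs, hw⟩ := hreflex u ⟨R, hu⟩
  obtain ⟨l, hl⟩ := exists_tendsto_sub_smul_of_tendsto_dJnorm hdJ
  have hlc : Tendsto l atTop (𝓝 c) := tendsto_multiplier_of_euler_identity (by linarith)
    hJφ hGφ hGu (isBoundedUnder_of ⟨R, hu⟩) hJc hl
  have hsub_bdd : IsBoundedUnder (· ≤ ·) atTop (norm ∘ fun n => (u ∘ s) n - v) :=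
    isBoundedUnder_of ⟨R + ‖v‖, fun n => (norm_sub_le _ _).trans (by grw [Function.comp_apply, hu (s n)])⟩
  have hkey : Tendsto (fun n => J' (u (s n)) (u (s n) - v)) atTop (𝓝 0) :=
    tendsto_apply_sub_of_weakConv hw hsub_bdd (hl.comp hs.tendsto_atTop)
      (hlc.comp hs.tendsto_atTop)
      (tendsto_iff_norm_sub_tendsto_zero.2 (hG'cpt (u ∘ s) v hw))
  exact ⟨v, s, hs, hwclosed (u ∘ s) v hw (fun n => hGu (s n)),
    halpha (u ∘ s) v hw hkey.limsup_eq.le⟩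

/-- Palais–Smale condition for `J(φ)=∫_Ω|∇φ|^p` on `N_g = {φ : ∫_{∂Ω} g|φ|^p = 1}`:
any sequence `(φ_n) ⊂ N_g` with `J(φ_n) → λ` and `‖dJ(φ_n)‖ → 0` has a subsequence
converging in `N_g`.  Here `X` models `W^{1,p}(Ω)`; `J, G` are the energy and boundary
functionals with derivatives `J′, G′`; the hypotheses encode that `J′` is of class
`α(W^{1,p}(Ω))`, `G′` is compact, `N_g` is weakly closed, `J` is coercive on `N_g`,
`X` is reflexive, and `⟨J′φ,φ⟩ = pJ(φ)`, `⟨G′φ,φ⟩ = pG(φ)`. -/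
theorem palais_smale_on_Ng
    {X : Type*} [NormedAddCommGroup X] [NormedSpace ℝ X] (p : ℝ) (hp : 1 < p)
    (J G : X → ℝ) (J' G' : X → X →L[ℝ] ℝ)
    (hJφ : ∀ φ : X, J' φ φ = p * J φ) (hGφ : ∀ φ : X, G' φ φ = p * G φ)
    (hJ'cont : Continuous J') (hG'cont : Continuous G')
    -- `J′` is of class `α(W^{1,p}(Ω))`:
    (halpha : ∀ (u : ℕ → X) (v : X), WeakConv u v →
      limsup (fun n => J' (u n) (u n - v)) atTop ≤ 0 → Tendsto u atTop (𝓝 v))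
    -- `G′` is compact:
    (hG'cpt : ∀ (u : ℕ → X) (v : X), WeakConv u v →
      Tendsto (fun n => ‖G' (u n) - G' v‖) atTop (𝓝 0))
    -- `N_g` is weakly closed:
    (hwclosed : ∀ (u : ℕ → X) (v : X), WeakConv u v → (∀ n, G (u n) = 1) → G v = 1)
    -- `J` is coercive on `N_g`:
    (hcoercive : ∀ c : ℝ, ∃ R : ℝ, ∀ φ : X, G φ = 1 → J φ ≤ c → ‖φ‖ ≤ R)
    -- reflexivity:
    (hreflex : ∀ u : ℕ → X, (∃ R : ℝ, ∀ n, ‖u n‖ ≤ R) →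
      ∃ (v : X) (s : ℕ → ℕ), StrictMono s ∧ WeakConv (u ∘ s) v) :
    ∀ (u : ℕ → X) (c : ℝ), (∀ n, G (u n) = 1) →
      Tendsto (fun n => J (u n)) atTop (𝓝 c) →
      Tendsto (fun n => dJnorm J' G' (u n)) atTop (𝓝 0) →
      ∃ (v : X) (s : ℕ → ℕ), StrictMono s ∧ G v = 1 ∧ Tendsto (u ∘ s) atTop (𝓝 v) :=
  palais_smale_on_Ng_general p hp J G J' G' hJφ hGφ halpha hG'cpt hwclosed hcoercive hreflex
end
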